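/- For every integer p ≥ 2, every real x ≥ 0, every integer N ≥ 1 and every integer k ≥ 2, with X_n := x/n² and g_k the polynomial of degree k − 2 satisfying e_k(z)·e_k(−z) = 1 − z^k g_k(z)/k!, one has the decomposition S_{2,p}(x) = Σ_{n=1}^{N−1} (μ(n)/n^p)(1 − e^{−X_n}) − 1/ζ(p) + (1/k!)·Σ_{n=N}^∞ (μ(n)/n^p)·X_n^k·(f_k(X_n) − g_k(X_n))/e_k(X_n) + Σ_{n=N}^∞ (μ(n)/n^p)·Σ_{r=1}^{k−1} (−1)^{r−1} X_n^r/r!, with all series converging absolutely. -/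

import Mathlib

open scoped Nat ArithmeticFunction ArithmeticFunction.Moebius

/-- `f k z = e^{-z} · ₁F₁(1; k+1; z) = e^{-z} · Σ_{r=0}^∞ k! z^r / (r+k)!`. -/
noncomputable def rieszF (k : ℕ) (z : ℝ) : ℝ :=
  Real.exp (-z) * ∑' r : ℕ, (k ! : ℝ) * z ^ r / (r + k)!

/-- `e k z = Σ_{r=0}^{k-1} z^r / r!`, the sum of the first `k` terms of the
exponential series. -/
noncomputable def expPartial (k : ℕ) (z : ℝ) : ℝ :=
  ∑ r ∈ Finset.range k, z ^ r / r !

/-- `X_n = x / n²`. -/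
noncomputable def Xn (x : ℝ) (n : ℕ) : ℝ := x / (n : ℝ) ^ 2

/-- The general term of the tail series `T_N^{(1)}(p;x)`
(before division by `k!`): `(μ(n)/n^p) · X_n^k (f_k(X_n) − g_k(X_n)) / e_k(X_n)`. -/
noncomputable def tail1Term (p k : ℕ) (g : Polynomial ℝ) (x : ℝ) (n : ℕ) : ℝ :=
  (μ n : ℝ) / (n : ℝ) ^ p *
    (Xn x n ^ k * (rieszF k (Xn x n) - g.eval (Xn x n)) / expPartial k (Xn x n))

/-- The general term of the tail series `T_N^{(2)}(p;x)`:
`(μ(n)/n^p) · Σ_{r=1}^{k−1} (−1)^{r−1} X_n^r / r!`. -/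
noncomputable def tail2Term (p k : ℕ) (x : ℝ) (n : ℕ) : ℝ :=
  (μ n : ℝ) / (n : ℝ) ^ p *
    ∑ r ∈ Finset.Ico 1 k, (-1 : ℝ) ^ (r - 1) * Xn x n ^ r / (r ! : ℝ)

/-!
Expanding `1/ζ(2j+p) = ∑ μ(n) n^{-2j-p}` turns the Riesz series into an absolutely convergent
double series; summing over `j` first gives
`S_{2,p}(x) = -∑ μ(n) n^{-p} e^{-X_n} = ∑ μ(n) n^{-p} (1 - e^{-X_n}) - 1/ζ(p)`.
For the terms with `n ≥ N` one splits `1 - e^{-X} = (e_k(-X) - e^{-X}) + (1 - e_k(-X))`.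
The second bracket is the alternating partial sum of the exponential series, and the first equals
`X^k (f_k(X) - g_k(X)) / (k! e_k(X))`, because `X^k f_k(X) = k! (1 - e^{-X} e_k(X))` while
`X^k g_k(X) = k! (1 - e_k(X) e_k(-X))` by the definition of `g_k`.
-/

open Finset

lemma tsum_eq_sum_Ico_add_tsum_nat_add {G : Type*} [AddCommGroup G] [TopologicalSpace G]
    [IsTopologicalAddGroup G] [T2Space G] {f : ℕ → G} (hf : Summable f) (hf0 : f 0 = 0)
    (N : ℕ) : ∑' n, f n = ∑ n ∈ Ico 1 N, f n + ∑' n, f (N + n) := by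
  rw [← hf.sum_add_tsum_nat_add N, range_eq_Ico]
  rcases N.eq_zero_or_pos with rfl | hN
  · simp
  rw [sum_eq_sum_Ico_succ_bot hN, hf0, zero_add]
  simp only [add_comm]

lemma tsum_pow_add_div_factorial (k : ℕ) (z : ℝ) :
    ∑' r : ℕ, z ^ (r + k) / (r + k)! = Real.exp z - expPartial k z := by
  rw [expPartial, Real.exp_eq_exp_ℝ, ← (NormedSpace.expSeries_div_hasSum_exp z).tsum_eq,
    ← (Real.summable_pow_div_factorial z).sum_add_tsum_nat_add k]
  ring

lemma pow_mul_rieszF (k : ℕ) (z : ℝ) :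
    z ^ k * rieszF k z = k ! * (1 - Real.exp (-z) * expPartial k z) := by
  have hseries : z ^ k * ∑' r : ℕ, (k ! : ℝ) * z ^ r / (r + k)!
      = k ! * (Real.exp z - expPartial k z) := by
    rw [← tsum_pow_add_div_factorial, ← tsum_mul_left, ← tsum_mul_left]
    exact tsum_congr fun r => by ring
  have hexp : Real.exp (-z) * Real.exp z = 1 := by
    rw [← Real.exp_add, neg_add_cancel, Real.exp_zero]
  rw [rieszF, mul_left_comm, hseries]
  linear_combination (k ! : ℝ) * hexp

lemma one_le_expPartial {k : ℕ} (hk : 1 ≤ k) {z : ℝ} (hz : 0 ≤ z) :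
    1 ≤ expPartial k z := by
  simpa [expPartial] using single_le_sum (f := fun r => z ^ r / r !) (fun r _ => by positivity)
    (mem_range.mpr hk)

lemma abs_expPartial_le (k : ℕ) (z : ℝ) : |expPartial k z| ≤ Real.exp |z| :=
  calc |expPartial k z| ≤ ∑ r ∈ range k, |z| ^ r / r ! := by
        refine (abs_sum_le_sum_abs _ _).trans_eq (sum_congr rfl fun r _ => ?_)
        rw [abs_div, abs_pow, Nat.abs_cast]
    _ ≤ Real.exp |z| := Real.sum_le_exp_of_nonneg (abs_nonneg z) k

lemma pow_mul_rieszF_sub_eval_div_expPartial {k : ℕ} {g : Polynomial ℝ} {z : ℝ}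
    (hg : expPartial k z * expPartial k (-z) = 1 - z ^ k * g.eval z / k !)
    (hz : expPartial k z ≠ 0) :
    z ^ k * (rieszF k z - g.eval z) / expPartial k z
      = k ! * (expPartial k (-z) - Real.exp (-z)) := by
  have hk : (k ! : ℝ) ≠ 0 := by positivity
  rw [div_eq_iff hz, mul_sub, pow_mul_rieszF]
  field_simp at hg
  linear_combination -hg

lemma sum_Ico_neg_one_pow_mul_pow_div_factorial {k : ℕ} (hk : 1 ≤ k) (z : ℝ) :
    ∑ r ∈ Ico 1 k, (-1 : ℝ) ^ (r - 1) * z ^ r / r ! = 1 - expPartial k (-z) := by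
  rw [expPartial, range_eq_Ico, sum_eq_sum_Ico_succ_bot hk]
  simp only [pow_zero, Nat.factorial_zero, Nat.cast_one, div_one, zero_add, sub_add_cancel_left,
    ← sum_neg_distrib]
  refine sum_congr rfl fun r hr => ?_
  obtain ⟨s, rfl⟩ := Nat.exists_eq_add_of_le' (mem_Ico.mp hr).1
  rw [neg_pow, pow_succ]
  simp only [Nat.add_sub_cancel]
  ring

lemma ofReal_tsum_moebius_div_pow_eq_inv_riemannZeta {m : ℕ} (hm : 1 < m) :
    ((∑' n : ℕ, (μ n : ℝ) / (n : ℝ) ^ m : ℝ) : ℂ) = (riemannZeta m)⁻¹ := by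
  have hre : 1 < (m : ℂ).re := by simpa using hm
  have hL : LSeries (fun n => ((μ n : ℤ) : ℂ)) m
      = ((∑' n : ℕ, (μ n : ℝ) / (n : ℝ) ^ m : ℝ) : ℂ) := by
    rw [Complex.ofReal_tsum, LSeries]
    refine tsum_congr fun n => ?_
    rcases eq_or_ne n 0 with rfl | hn
    · simp
    · rw [LSeries.term_of_ne_zero hn, Complex.cpow_natCast]
      push_cast
      rfl
  rw [← hL, ← ArithmeticFunction.LSeries_zeta_eq_riemannZeta hre]
  exact eq_inv_of_mul_eq_one_right (ArithmeticFunction.LSeries_zeta_mul_Lseries_moebius hre)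

lemma abs_moebius_div_pow_le {p m : ℕ} (hpm : p ≤ m) (n : ℕ) :
    |(μ n : ℝ) / (n : ℝ) ^ m| ≤ 1 / (n : ℝ) ^ p := by
  rcases eq_or_ne n 0 with rfl | hn
  · simp
  have : (1 : ℝ) ≤ n := by exact_mod_cast Nat.one_le_iff_ne_zero.mpr hn
  rw [abs_div, abs_pow, Nat.abs_cast]
  gcongr
  exact_mod_cast ArithmeticFunction.abs_moebius_le_one

lemma summable_moebius_div_pow_mul {p : ℕ} (hp : 1 < p) {c : ℕ → ℝ} {C : ℝ}
    (hc : ∀ n, |c n| ≤ C) :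
    Summable fun n : ℕ => (μ n : ℝ) / (n : ℝ) ^ p * c n := by
  refine ((Real.summable_one_div_nat_pow.mpr hp).mul_right C).of_norm_bounded fun n => ?_
  rw [Real.norm_eq_abs, abs_mul]
  exact mul_le_mul (abs_moebius_div_pow_le le_rfl n) (hc n) (abs_nonneg _) (by positivity)

lemma abs_Xn_le (x : ℝ) (n : ℕ) : |Xn x n| ≤ |x| := by
  rcases eq_or_ne n 0 with rfl | hn
  · simp [Xn]
  have : (1 : ℝ) ≤ (n : ℝ) ^ 2 :=
    one_le_pow₀ (by exact_mod_cast Nat.one_le_iff_ne_zero.mpr hn)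
  rw [Xn, abs_div, abs_of_pos (by positivity : (0 : ℝ) < (n : ℝ) ^ 2)]
  exact div_le_self (abs_nonneg x) this

lemma exp_neg_Xn_le (x : ℝ) (n : ℕ) : Real.exp (-Xn x n) ≤ Real.exp |x| :=
  Real.exp_le_exp.mpr ((neg_le_abs _).trans (by simpa using abs_Xn_le x n))

lemma abs_expPartial_neg_Xn_le (k : ℕ) (x : ℝ) (n : ℕ) :
    |expPartial k (-Xn x n)| ≤ Real.exp |x| :=
  (abs_expPartial_le k _).trans (Real.exp_le_exp.mpr (by simpa using abs_Xn_le x n))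

/-- The Riesz series with `1/ζ(2j+p)` expanded as a Möbius series is
`∑ j, ∑ n, rieszTerm p x j n`. -/
noncomputable def rieszTerm (p : ℕ) (x : ℝ) (j n : ℕ) : ℝ :=
  (-1 : ℝ) ^ (j + 1) * x ^ j / j ! * ((μ n : ℝ) / (n : ℝ) ^ (2 * j + p))

lemma summable_uncurry_rieszTerm {p : ℕ} (hp : 1 < p) (x : ℝ) :
    Summable (Function.uncurry (rieszTerm p x)) := by
  refine ((Real.summable_pow_div_factorial |x|).mul_of_nonneg
    (Real.summable_one_div_nat_pow.mpr hp) (fun j => by positivity)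
    (fun n => by positivity)).of_norm_bounded fun ⟨j, n⟩ => ?_
  rw [Function.uncurry_apply_pair, rieszTerm, Real.norm_eq_abs, abs_mul]
  refine mul_le_mul (le_of_eq ?_) (abs_moebius_div_pow_le (by omega) n) (abs_nonneg _)
    (by positivity)
  simp [abs_div]

lemma tsum_rieszTerm_eq (p : ℕ) (x : ℝ) (n : ℕ) :
    ∑' j : ℕ, rieszTerm p x j n = -((μ n : ℝ) / (n : ℝ) ^ p * Real.exp (-Xn x n)) := by
  rcases eq_or_ne n 0 with rfl | hn
  · simp [rieszTerm]
  have hterm : ∀ j,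
      rieszTerm p x j n = -((μ n : ℝ) / (n : ℝ) ^ p * ((-Xn x n) ^ j / j !)) := by
    intro j
    rw [rieszTerm, Xn, pow_add _ (2 * j) p, pow_mul, neg_pow (x / _), div_pow]
    field_simp
    ring
  rw [tsum_congr hterm, tsum_neg, tsum_mul_left, Real.exp_eq_exp_ℝ,
    ← (NormedSpace.expSeries_div_hasSum_exp _).tsum_eq]

lemma riesz_summand_eq_ofReal_tsum_rieszTerm {p : ℕ} (hp : 1 < p) (x : ℝ) (j : ℕ) :
    (-1 : ℂ) ^ (j + 1) * (x : ℂ) ^ j / (j ! * riemannZeta (2 * j + p))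
      = ((∑' n : ℕ, rieszTerm p x j n : ℝ) : ℂ) := by
  have hzeta := ofReal_tsum_moebius_div_pow_eq_inv_riemannZeta (m := 2 * j + p) (by omega)
  simp only [rieszTerm, tsum_mul_left, Complex.ofReal_mul, hzeta]
  push_cast
  field_simp

lemma summable_norm_riesz_summand {p : ℕ} (hp : 1 < p) (x : ℝ) :
    Summable fun j : ℕ =>
      ‖(-1 : ℂ) ^ (j + 1) * (x : ℂ) ^ j / (j ! * riemannZeta (2 * j + p))‖ := by
  simp only [riesz_summand_eq_ofReal_tsum_rieszTerm hp, Complex.norm_real]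
  have hsum := (summable_uncurry_rieszTerm hp x).norm
  exact hsum.prod.of_nonneg_of_le (fun _ => norm_nonneg _)
    fun j => norm_tsum_le_tsum_norm (hsum.prod_factor j)

lemma tsum_riesz_summand {p : ℕ} (hp : 1 < p) (x : ℝ) :
    ∑' j : ℕ, (-1 : ℂ) ^ (j + 1) * (x : ℂ) ^ j / (j ! * riemannZeta (2 * j + p))
      = ((∑' n : ℕ, (μ n : ℝ) / (n : ℝ) ^ p * (1 - Real.exp (-Xn x n)) : ℝ) : ℂ)
        - 1 / riemannZeta p := by
  have hexp : Summable fun n : ℕ => (μ n : ℝ) / (n : ℝ) ^ p * Real.exp (-Xn x n) :=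
    summable_moebius_div_pow_mul hp fun n => by
      rw [abs_of_pos (Real.exp_pos _)]; exact exp_neg_Xn_le x n
  have hone : Summable fun n : ℕ => (μ n : ℝ) / (n : ℝ) ^ p := by
    simpa using summable_moebius_div_pow_mul hp (c := fun _ => 1) fun _ => abs_one.le
  rw [tsum_congr (riesz_summand_eq_ofReal_tsum_rieszTerm hp x), ← Complex.ofReal_tsum,
    ← (summable_uncurry_rieszTerm hp x).tsum_comm, tsum_congr (tsum_rieszTerm_eq p x),
    tsum_neg, tsum_congr fun n => mul_one_sub _ _, hone.tsum_sub hexp, one_div,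
    ← ofReal_tsum_moebius_div_pow_eq_inv_riemannZeta hp]
  push_cast
  ring

section Tails

variable {p k : ℕ} {g : Polynomial ℝ} {x : ℝ}

lemma tail1Term_eq (hk : 1 ≤ k)
    (hg : ∀ z : ℝ, expPartial k z * expPartial k (-z) = 1 - z ^ k * g.eval z / k !)
    (hx : 0 ≤ x) (n : ℕ) :
    tail1Term p k g x n
      = (μ n : ℝ) / (n : ℝ) ^ p * (k ! * (expPartial k (-Xn x n) - Real.exp (-Xn x n))) := by
  have hX : 0 ≤ Xn x n := div_nonneg hx (sq_nonneg _)
  rw [tail1Term, pow_mul_rieszF_sub_eval_div_expPartial (hg _)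
    (one_pos.trans_le (one_le_expPartial hk hX)).ne']

lemma tail2Term_eq (hk : 1 ≤ k) (n : ℕ) :
    tail2Term p k x n = (μ n : ℝ) / (n : ℝ) ^ p * (1 - expPartial k (-Xn x n)) := by
  rw [tail2Term, sum_Ico_neg_one_pow_mul_pow_div_factorial hk]

lemma summable_tail1Term (hp : 1 < p) (hk : 1 ≤ k)
    (hg : ∀ z : ℝ, expPartial k z * expPartial k (-z) = 1 - z ^ k * g.eval z / k !)
    (hx : 0 ≤ x) : Summable (tail1Term p k g x) := by
  simp only [funext (tail1Term_eq hk hg hx)]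
  refine summable_moebius_div_pow_mul hp (C := k ! * (Real.exp |x| + Real.exp |x|)) fun n => ?_
  rw [abs_mul, Nat.abs_cast]
  gcongr
  refine (abs_sub _ _).trans (add_le_add (abs_expPartial_neg_Xn_le k x n) ?_)
  rw [abs_of_pos (Real.exp_pos _)]
  exact exp_neg_Xn_le x n

lemma summable_tail2Term (hp : 1 < p) (hk : 1 ≤ k) : Summable (tail2Term p k x) := by
  simp only [funext (tail2Term_eq hk)]
  refine summable_moebius_div_pow_mul hp (C := 1 + Real.exp |x|) fun n => ?_
  exact (abs_sub _ _).trans (add_le_add abs_one.le (abs_expPartial_neg_Xn_le k x n))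

lemma moebius_div_pow_mul_one_sub_exp_neg_Xn (hk : 1 ≤ k)
    (hg : ∀ z : ℝ, expPartial k z * expPartial k (-z) = 1 - z ^ k * g.eval z / k !)
    (hx : 0 ≤ x) (n : ℕ) :
    (μ n : ℝ) / (n : ℝ) ^ p * (1 - Real.exp (-Xn x n))
      = 1 / k ! * tail1Term p k g x n + tail2Term p k x n := by
  rw [tail1Term_eq hk hg hx, tail2Term_eq hk]
  field_simp
  ring

end Tails

theorem riesz_computational_scheme_general (p : ℕ) (hp : 2 ≤ p) (x : ℝ) (hx : 0 ≤ x)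
    (N : ℕ) (k : ℕ) (hk : 2 ≤ k) (g : Polynomial ℝ)
    (hg : ∀ z : ℝ, expPartial k z * expPartial k (-z) = 1 - z ^ k * g.eval z / k !) :
    Summable (fun j : ℕ =>
      ‖(-1 : ℂ) ^ (j + 1) * (x : ℂ) ^ j / (j ! * riemannZeta (2 * j + p))‖) ∧
    Summable (fun n : ℕ => |tail1Term p k g x (N + n)|) ∧
    Summable (fun n : ℕ => |tail2Term p k x (N + n)|) ∧
    ∑' j : ℕ, (-1 : ℂ) ^ (j + 1) * (x : ℂ) ^ j / (j ! * riemannZeta (2 * j + p)) =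
      ((∑ n ∈ Finset.Ico 1 N,
          (μ n : ℝ) / (n : ℝ) ^ p * (1 - Real.exp (-Xn x n)) : ℝ) : ℂ)
        - 1 / riemannZeta p
        + ((1 / (k ! : ℝ) * ∑' n : ℕ, tail1Term p k g x (N + n) : ℝ) : ℂ)
        + ((∑' n : ℕ, tail2Term p k x (N + n) : ℝ) : ℂ) := by
  have hp1 : 1 < p := by omega
  have hk1 : 1 ≤ k := by omega
  have hs1 : Summable fun n => tail1Term p k g x (N + n) :=
    (summable_tail1Term hp1 hk1 hg hx).comp_injective (add_right_injective N)
  have hs2 : Summable fun n => tail2Term p k x (N + n) :=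
    (summable_tail2Term hp1 hk1).comp_injective (add_right_injective N)
  have hs0 : Summable fun n : ℕ => (μ n : ℝ) / (n : ℝ) ^ p * (1 - Real.exp (-Xn x n)) := by
    simp only [moebius_div_pow_mul_one_sub_exp_neg_Xn hk1 hg hx]
    exact ((summable_tail1Term hp1 hk1 hg hx).mul_left _).add (summable_tail2Term hp1 hk1)
  refine ⟨summable_norm_riesz_summand hp1 x, hs1.abs, hs2.abs, ?_⟩
  rw [tsum_riesz_summand hp1 x, tsum_eq_sum_Ico_add_tsum_nat_add hs0 (by simp) N,
    tsum_congr fun n => moebius_div_pow_mul_one_sub_exp_neg_Xn hk1 hg hx (N + n),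
    (hs1.mul_left _).tsum_add hs2, tsum_mul_left]
  push_cast
  ring

theorem riesz_computational_scheme (p : ℕ) (hp : 2 ≤ p) (x : ℝ) (hx : 0 ≤ x)
    (N : ℕ) (hN : 1 ≤ N) (k : ℕ) (hk : 2 ≤ k) (g : Polynomial ℝ)
    (hg : ∀ z : ℝ, expPartial k z * expPartial k (-z) = 1 - z ^ k * g.eval z / k !) :
    Summable (fun j : ℕ =>
      ‖(-1 : ℂ) ^ (j + 1) * (x : ℂ) ^ j / (j ! * riemannZeta (2 * j + p))‖) ∧
    Summable (fun n : ℕ => |tail1Term p k g x (N + n)|) ∧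
    Summable (fun n : ℕ => |tail2Term p k x (N + n)|) ∧
    ∑' j : ℕ, (-1 : ℂ) ^ (j + 1) * (x : ℂ) ^ j / (j ! * riemannZeta (2 * j + p)) =
      ((∑ n ∈ Finset.Ico 1 N,
          (μ n : ℝ) / (n : ℝ) ^ p * (1 - Real.exp (-Xn x n)) : ℝ) : ℂ)
        - 1 / riemannZeta p
        + ((1 / (k ! : ℝ) * ∑' n : ℕ, tail1Term p k g x (N + n) : ℝ) : ℂ)
        + ((∑' n : ℕ, tail2Term p k x (N + n) : ℝ) : ℂ) :=
  riesz_computational_scheme_general p hp x hx N k hk g hg
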